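/- arXiv:1402.0614 — 2 statements merged into one kernel-verified Lean document; each statement's English description precedes it below -/
import Mathlib

section
/- Let G_dl and G_ul be N×N positive semidefinite Hermitian matrices with G_ul ⪯ G_dl. Then log det(I_N + (I_N + G_dl)^{-1} G_ul) ≤ log det(2·I_N) = N·log 2. -/
/-!
Put `A = 1 + G_dl` and `T = A^{-1/2}`. Sylvester's identity `det (1 + XY) = det (1 + YX)` turns
`det (1 + A⁻¹ G_ul)` into `det (1 + T G_ul T)`, and congruence by `T` turns `0 ≤ G_ul ≤ A` into
`0 ≤ T G_ul T ≤ 1`. Hence `1 + T G_ul T` has all its eigenvalues in `[1, 2]`, and its determinant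
lies in `(0, 2^N]`.
-/

open Matrix
open scoped ComplexOrder
open scoped MatrixOrder

namespace Matrix

variable {n 𝕜 : Type*} [Fintype n] [DecidableEq n] [RCLike 𝕜] {A B : Matrix n n 𝕜}

lemma IsHermitian.eigenvalues_le_of_le_algebraMap (hA : A.IsHermitian) {c : ℝ}
    (h : A ≤ algebraMap ℝ _ c) (i : n) : hA.eigenvalues i ≤ c :=
  (le_algebraMap_iff_spectrum_le hA.isSelfAdjoint).mp h _ (hA.eigenvalues_mem_spectrum_real i)

lemma PosSemidef.re_det_le_of_le_algebraMap (hA : A.PosSemidef) {c : ℝ}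
    (h : A ≤ algebraMap ℝ _ c) : RCLike.re A.det ≤ c ^ Fintype.card n := by
  rw [hA.1.det_eq_prod_eigenvalues, ← RCLike.ofReal_prod, RCLike.ofReal_re]
  calc ∏ i, hA.1.eigenvalues i ≤ ∏ _i : n, c :=
        Finset.prod_le_prod (fun i _ => hA.eigenvalues_nonneg i)
          fun i _ => hA.1.eigenvalues_le_of_le_algebraMap h i
    _ = c ^ Fintype.card n := Finset.prod_const c

lemma PosSemidef.det_one_add_inv_mul (hA : A.PosSemidef) (B : Matrix n n 𝕜) :
    det (1 + A⁻¹ * B) = det (1 + (CFC.sqrt A)⁻¹ * B * (CFC.sqrt A)⁻¹) := by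
  have hA_inv : A⁻¹ = (CFC.sqrt A)⁻¹ * (CFC.sqrt A)⁻¹ := by
    rw [← mul_inv_rev, CFC.sqrt_mul_sqrt_self A hA.nonneg]
  rw [hA_inv, Matrix.mul_assoc, det_one_add_mul_comm]

lemma PosDef.inv_sqrt_mul_self_mul_inv_sqrt (hA : A.PosDef) :
    (CFC.sqrt A)⁻¹ * A * (CFC.sqrt A)⁻¹ = 1 := by
  have hS : IsUnit (CFC.sqrt A).det :=
    (isUnit_iff_isUnit_det _).mp ((CFC.isUnit_sqrt_iff A hA.posSemidef.nonneg).mpr hA.isUnit)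
  nth_rw 2 [← CFC.sqrt_mul_sqrt_self A hA.posSemidef.nonneg]
  rw [← Matrix.mul_assoc, nonsing_inv_mul _ hS, Matrix.one_mul, mul_nonsing_inv _ hS]

lemma PosDef.re_det_one_add_inv_mul_mem_Ioc (hA : A.PosDef) (hB : 0 ≤ B) (hBA : B ≤ A) :
    RCLike.re (det (1 + A⁻¹ * B)) ∈ Set.Ioc 0 (2 ^ Fintype.card n) := by
  set T := (CFC.sqrt A)⁻¹
  have hT : Tᴴ = T := (CFC.sqrt_nonneg A).posSemidef.1.inv
  have hQ : (T * B * T).PosSemidef := by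
    simpa [hT] using hB.posSemidef.conjTranspose_mul_mul_same T
  have hP : (1 + T * B * T).PosDef := PosDef.one.add_posSemidef hQ
  have hP_le_two : 1 + T * B * T ≤ algebraMap ℝ _ 2 := by
    have h : algebraMap ℝ _ 2 - (1 + T * B * T) = Tᴴ * (A - B) * T := by
      rw [hT, Matrix.mul_sub, Matrix.sub_mul, hA.inv_sqrt_mul_self_mul_inv_sqrt, map_ofNat,
        ← one_add_one_eq_two]
      abel
    rw [le_iff, h]
    exact (le_iff.mp hBA).conjTranspose_mul_mul_same T
  rw [hA.posSemidef.det_one_add_inv_mul]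
  exact ⟨(RCLike.pos_iff.mp hP.det_pos).1, hP.posSemidef.re_det_le_of_le_algebraMap hP_le_two⟩

end Matrix

/-- If `G_ul ⪯ G_dl` are positive semidefinite Hermitian `N × N` matrices, then
`log₂ det(I + (I + G_dl)⁻¹ G_ul) ≤ log₂ det(2·I) = N · log₂ 2`. -/
theorem logdet_inv_mul_le {N : ℕ}
    (Gdl Gul : Matrix (Fin N) (Fin N) ℂ)
    (hGdl : Gdl.PosSemidef) (hGul : Gul.PosSemidef)
    (hle : (Gdl - Gul).PosSemidef) :
    Real.logb 2 (((1 : Matrix (Fin N) (Fin N) ℂ) + (1 + Gdl)⁻¹ * Gul).det.re)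
        ≤ Real.logb 2 (((2 : ℂ) • (1 : Matrix (Fin N) (Fin N) ℂ)).det.re) ∧
      Real.logb 2 (((2 : ℂ) • (1 : Matrix (Fin N) (Fin N) ℂ)).det.re)
        = (N : ℝ) * Real.logb 2 2 := by
  have hA : (1 + Gdl).PosDef := PosDef.one.add_posSemidef hGdl
  have hGul_le : Gul ≤ 1 + Gdl := by
    rw [le_iff, add_sub_assoc]
    exact (PosDef.one.add_posSemidef hle).posSemidef
  obtain ⟨hpos, hdet⟩ := hA.re_det_one_add_inv_mul_mem_Ioc hGul.nonneg hGul_le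
  rw [Fintype.card_fin] at hdet
  have hdet_two : ((2 : ℂ) • (1 : Matrix (Fin N) (Fin N) ℂ)).det.re = 2 ^ N := by
    simpa using Complex.ofReal_re (2 ^ N)
  rw [hdet_two]
  exact ⟨Real.logb_le_logb_of_le one_lt_two hpos hdet, Real.logb_pow _ _ _⟩
end

section
/- For M, N positive integers with min(M,N) = q and α > 0, the minimum of Σ_{i=1}^{q} (M+N+1−2i)·x_i subject to Σ_{i=1}^{q} (α − x_i)^+ ≤ r and 0 ≤ x_1 ≤ x_2 ≤ ⋯ ≤ x_q equals α·d_{M,N}(r/α) for all 0 ≤ r ≤ q·α, where d_{M,N}(·) is the piecewise linear function joining the points (k, (M−k)(N−k)) for integers k = 0, 1, …, q. -/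
/-!
Treat the budget `∑ (α - xᵢ)⁺ ≤ r` with Lagrange multiplier `c_k`, where `c_i = M + N - 1 - 2i`
is the (decreasing, positive) cost of coordinate `i` and `k ≤ r/α ≤ k + 1`. Coordinatewise,
`c_i t + c_k (α - t)⁺` is minimised by `t = 0` for `i < k` and `t = α` for `i > k`; the point that
also puts `(k + 1)α - r` in coordinate `k` exhausts the budget exactly, so it solves the LP.
Its value telescopes, since `c_i = (M - i)(N - i) - (M - i - 1)(N - i - 1)` and
`(M - q)(N - q) = 0`, to `α (M - k - 1)(N - k - 1) + c_k ((k + 1)α - r) = α d_{M,N}(r/α)`.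
-/

/-- The classical MIMO point-to-point DMT curve: the piecewise linear function
joining the points `(k, (M−k)(N−k))` for integers `k ∈ [0, min M N]`. -/
noncomputable def dmtCurve (M N : ℕ) (r : ℝ) : ℝ :=
  ((M : ℝ) - ⌊r⌋) * ((N : ℝ) - ⌊r⌋) - (r - ⌊r⌋) * ((M : ℝ) + (N : ℝ) - 2 * ⌊r⌋ - 1)

open Finset

section LinearProgram

variable {q : ℕ}

def dmtLPValues (c : Fin q → ℝ) (α r : ℝ) : Set ℝ :=
  {y | ∃ x : Fin q → ℝ, (∀ i, 0 ≤ x i) ∧ Monotone x ∧ (∑ i, max (α - x i) 0) ≤ r ∧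
    y = ∑ i, c i * x i}

def dmtLPOptimum (α r : ℝ) (k i : Fin q) : ℝ :=
  if i < k then 0 else if i = k then (k + 1) * α - r else α

variable {α r : ℝ} {k : Fin q}

lemma dmtLPOptimum_nonneg (hk₁ : k * α ≤ r) (hk₂ : r ≤ (k + 1) * α) (i : Fin q) :
    0 ≤ dmtLPOptimum α r k i := by
  unfold dmtLPOptimum
  split_ifs <;> linarith

lemma dmtLPOptimum_le (hk₁ : k * α ≤ r) (hk₂ : r ≤ (k + 1) * α) (i : Fin q) :
    dmtLPOptimum α r k i ≤ α := by
  unfold dmtLPOptimum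
  split_ifs <;> linarith

lemma monotone_dmtLPOptimum (hk₁ : k * α ≤ r) (hk₂ : r ≤ (k + 1) * α) :
    Monotone (dmtLPOptimum α r k) := by
  intro i j hij
  have := dmtLPOptimum_nonneg hk₁ hk₂ k
  have := dmtLPOptimum_le hk₁ hk₂ k
  unfold dmtLPOptimum at *
  split_ifs at * <;> first | linarith | omega

lemma sum_max_sub_dmtLPOptimum (hk₁ : k * α ≤ r) (hk₂ : r ≤ (k + 1) * α) :
    ∑ i, max (α - dmtLPOptimum α r k i) 0 = r := by
  have hdeficit (i : Fin q) : max (α - dmtLPOptimum α r k i) 0 =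
      (if i < k then α else 0) + (if i = k then r - k * α else 0) := by
    unfold dmtLPOptimum
    have hα : 0 ≤ α := by linarith
    split_ifs <;> first | omega | (rw [max_eq_left (by linarith)]; ring)
  simp only [hdeficit, sum_add_distrib, sum_ite_eq', mem_univ, if_true, ← sum_filter,
    filter_gt_eq_Iio, sum_const, Fin.card_Iio, nsmul_eq_mul]
  ring

lemma sum_mul_dmtLPOptimum (c : Fin q → ℝ) :
    ∑ i, c i * dmtLPOptimum α r k i = c k * ((k + 1) * α - r) + α * ∑ i ∈ Ioi k, c i := by
  have hterm (i : Fin q) : c i * dmtLPOptimum α r k i =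
      (if i = k then c k * ((k + 1) * α - r) else 0) + (if k < i then α * c i else 0) := by
    unfold dmtLPOptimum
    split_ifs <;> first | omega | (subst_vars; ring)
  simp only [hterm, sum_add_distrib, sum_ite_eq', mem_univ, if_true, ← sum_filter,
    filter_lt_eq_Ioi, mul_sum]

variable {c : Fin q → ℝ}

lemma mul_dmtLPOptimum_add_le (hc : Antitone c) (hc₀ : ∀ i, 0 ≤ c i)
    (hk₁ : k * α ≤ r) (hk₂ : r ≤ (k + 1) * α) (i : Fin q) {t : ℝ} (ht : 0 ≤ t) :
    c i * dmtLPOptimum α r k i + c k * max (α - dmtLPOptimum α r k i) 0 ≤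
      c i * t + c k * max (α - t) 0 := by
  have hα : α ≤ t + max (α - t) 0 := by linarith [le_max_left (α - t) 0]
  rcases lt_or_ge k i with hki | hik
  · have hx : dmtLPOptimum α r k i = α := by
      unfold dmtLPOptimum
      rw [if_neg (by omega), if_neg (by omega)]
    rw [hx, sub_self, max_self, mul_zero, add_zero]
    nlinarith [mul_le_mul_of_nonneg_right (hc hki.le) (le_max_right (α - t) 0),
      mul_le_mul_of_nonneg_left hα (hc₀ i)]
  · have hx : c i * dmtLPOptimum α r k i + c k * max (α - dmtLPOptimum α r k i) 0 = c k * α := by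
      unfold dmtLPOptimum
      split_ifs <;> first | omega | (subst_vars; rw [max_eq_left (by linarith)]; ring)
    rw [hx]
    nlinarith [mul_le_mul_of_nonneg_right (hc hik) ht, mul_le_mul_of_nonneg_left hα (hc₀ k)]

theorem isLeast_dmtLPValues (hc : Antitone c) (hc₀ : ∀ i, 0 ≤ c i)
    (hk₁ : k * α ≤ r) (hk₂ : r ≤ (k + 1) * α) :
    IsLeast (dmtLPValues c α r) (c k * ((k + 1) * α - r) + α * ∑ i ∈ Ioi k, c i) := by
  rw [← sum_mul_dmtLPOptimum]
  refine ⟨⟨_, dmtLPOptimum_nonneg hk₁ hk₂, monotone_dmtLPOptimum hk₁ hk₂,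
    (sum_max_sub_dmtLPOptimum hk₁ hk₂).le, rfl⟩, ?_⟩
  rintro y ⟨x, hx₀, -, hxr, rfl⟩
  have hlagrange := sum_le_sum fun i (_ : i ∈ univ) =>
    mul_dmtLPOptimum_add_le hc hc₀ hk₁ hk₂ i (hx₀ i)
  rw [sum_add_distrib, sum_add_distrib, ← mul_sum, ← mul_sum,
    sum_max_sub_dmtLPOptimum hk₁ hk₂] at hlagrange
  nlinarith [mul_le_mul_of_nonneg_left hxr (hc₀ k)]

end LinearProgram

lemma Fin.sum_Ioi_sub_succ {M : Type*} [AddCommGroup M] {q : ℕ} (f : ℕ → M) (k : Fin q) :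
    ∑ i ∈ Ioi k, (f i - f (i + 1)) = f (k + 1) - f q := by
  have hmap := sum_map (Ioi k) Fin.valEmbedding fun i => f i - f (i + 1)
  rw [Fin.map_valEmbedding_Ioi, ← Ico_add_one_left_eq_Ioo] at hmap
  simp only [Fin.valEmbedding_apply] at hmap
  rw [← hmap, ← neg_sub, ← sum_Ico_sub f (show (k : ℕ) + 1 ≤ q from k.isLt), ← sum_neg_distrib]
  simp only [neg_sub]

lemma exists_fin_le_le_add_one {q : ℕ} (hq : 0 < q) {ρ : ℝ} (h₀ : 0 ≤ ρ) (h₁ : ρ ≤ q) :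
    ∃ k : Fin q, (k : ℝ) ≤ ρ ∧ ρ ≤ k + 1 := by
  by_cases hρ : ⌊ρ⌋₊ < q
  · exact ⟨⟨_, hρ⟩, Nat.floor_le h₀, (Nat.lt_floor_add_one ρ).le⟩
  · have : (q : ℝ) ≤ ρ := le_trans (by exact_mod_cast not_lt.1 hρ) (Nat.floor_le h₀)
    refine ⟨⟨q - 1, by omega⟩, ?_, ?_⟩ <;> simp only [Nat.cast_pred hq] <;> linarith

lemma dmtCurve_eq_of_le_of_le {M N : ℕ} {ρ : ℝ} (k : ℤ) (h₁ : k ≤ ρ) (h₂ : ρ ≤ k + 1) :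
    dmtCurve M N ρ = (M - k) * (N - k) - (ρ - k) * (M + N - 2 * k - 1) := by
  rcases h₂.lt_or_eq with h₂ | rfl
  · rw [dmtCurve, Int.floor_eq_iff.2 ⟨h₁, h₂⟩]
  · rw [dmtCurve, ← Int.cast_one, ← Int.cast_add, Int.floor_intCast]
    push_cast
    ring

def dmtCoeff (M N q : ℕ) (i : Fin q) : ℝ :=
  (M : ℝ) + (N : ℝ) + 1 - 2 * ((i.val : ℝ) + 1)

lemma antitone_dmtCoeff (M N q : ℕ) : Antitone (dmtCoeff M N q) := fun i j hij => by
  have : (i : ℝ) ≤ j := by exact_mod_cast hij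
  simp only [dmtCoeff]
  linarith

lemma dmtCoeff_nonneg {M N q : ℕ} (h : 2 * q ≤ M + N) (i : Fin q) : 0 ≤ dmtCoeff M N q i := by
  have : 2 * ((i : ℝ) + 1) ≤ M + N := by exact_mod_cast (by omega : 2 * (i + 1) ≤ M + N)
  simp only [dmtCoeff]
  linarith

lemma sum_Ioi_dmtCoeff (M N : ℕ) {q : ℕ} (k : Fin q) :
    ∑ i ∈ Ioi k, dmtCoeff M N q i = (M - (k + 1 : ℝ)) * (N - (k + 1)) - (M - q) * (N - q) := by
  have hD (i : Fin q) : dmtCoeff M N q i =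
      (M - (i : ℕ) : ℝ) * (N - (i : ℕ)) - (M - ((i + 1 : ℕ) : ℝ)) * (N - ((i + 1 : ℕ) : ℝ)) := by
    simp only [dmtCoeff]
    push_cast
    ring
  rw [sum_congr rfl fun i _ => hD i,
    Fin.sum_Ioi_sub_succ (fun j : ℕ => ((M : ℝ) - j) * ((N : ℝ) - j)) k]
  push_cast
  ring

/-- The diversity–multiplexing tradeoff linear program: for `q = min(M,N)` and `α > 0`,
the minimum of `∑ (M+N+1−2i)·xᵢ` over `0 ≤ x₁ ≤ ⋯ ≤ x_q` with
`∑ (α − xᵢ)⁺ ≤ r` equals `α · d_{M,N}(r/α)` for `0 ≤ r ≤ q·α`. -/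
theorem dmt_linear_program (M N : ℕ) (hM : 0 < M) (hN : 0 < N)
    (q : ℕ) (hq : q = min M N) (α : ℝ) (hα : 0 < α)
    (r : ℝ) (hr0 : 0 ≤ r) (hr1 : r ≤ (q : ℝ) * α) :
    IsLeast {y : ℝ | ∃ x : Fin q → ℝ, (∀ i, 0 ≤ x i) ∧ Monotone x ∧
        (∑ i, max (α - x i) 0) ≤ r ∧
        y = ∑ i, ((M : ℝ) + (N : ℝ) + 1 - 2 * ((i.val : ℝ) + 1)) * x i}
      (α * dmtCurve M N (r / α)) := by
  have hq₀ : ((M : ℝ) - q) * (N - q) = 0 := by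
    rcases min_choice M N with h | h <;> simp [hq, h]
  obtain ⟨k, hk₁, hk₂⟩ := exists_fin_le_le_add_one (by omega) (div_nonneg hr0 hα.le)
    ((div_le_iff₀ hα).2 hr1)
  have hval : α * dmtCurve M N (r / α) =
      dmtCoeff M N q k * ((k + 1) * α - r) + α * ∑ i ∈ Ioi k, dmtCoeff M N q i := by
    rw [dmtCurve_eq_of_le_of_le k (by exact_mod_cast hk₁) (by exact_mod_cast hk₂),
      sum_Ioi_dmtCoeff, hq₀, dmtCoeff]
    push_cast
    field_simp
    ring
  rw [hval]
  exact isLeast_dmtLPValues (antitone_dmtCoeff M N q) (dmtCoeff_nonneg (by omega))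
    ((le_div_iff₀ hα).1 hk₁) ((div_le_iff₀ hα).1 hk₂)
end
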